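/- Let A be a right-continuous non-decreasing finite function on [0,∞) with A(0)=0, and let 0 < γ < β, with jumps of A bounded by Φ ≥ 0 (ΔA_s ≤ Φ for all s). Then for all s ≥ 0, ∫_{(0,s]} E(βA)_{t−}·E(γA)_{t−}^{−1} dA_t ≤ ((1+γΦ)/(β−γ))·E(βA)_s·E(γA)_s^{−1}. -/

import Mathlib

open MeasureTheory

/-- The jump of a function `A` at a point `s`. -/
noncomputable def jumpOf (A : ℝ → ℝ) (s : ℝ) : ℝ :=
  A s - Function.leftLim A s

/-!
Write `F = E(βA) / E(γA)` and `c = (β - γ) / (1 + γΦ)`. Taking logarithms, the increment of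
`log F` over `(t₁, t₂]` is `(β - γ)` times the continuous part of `dA` plus
`∑ log ((1 + βΔA_u) / (1 + γΔA_u))` over the jumps, and `(1 + βx) / (1 + γx) ≥ 1 + cx` for
`0 ≤ x ≤ Φ`. As `c ≤ β - γ` and `x ↦ log (1 + cx)` is subadditive, this gives
`F t₁ * (1 + c (A t₂ - A t₁)) ≤ F t₂`, i.e. `c F(t₁) dA ≤ dF` on every interval. Hence every
lower Riemann–Stieltjes sum of `c ∫ F(t-) dA` over `(0, s]` is at most `F s - F 0 ≤ F s`, and the
step functions of these sums converge boundedly to `F(t-)`.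
-/

open Filter Topology Set Real Function

/-- The largest point of the grid `a + δℤ` strictly below `u`. -/
noncomputable def gridBelow (a δ u : ℝ) : ℝ := a + (⌈(u - a) / δ⌉ - 1) * δ

section gridBelow

variable {a δ u : ℝ}

lemma gridBelow_lt (hδ : 0 < δ) : gridBelow a δ u < u := by
  have h := (lt_div_iff₀ hδ).1 (sub_lt_iff_lt_add.2 (Int.ceil_lt_add_one ((u - a) / δ)))
  unfold gridBelow
  linarith

lemma sub_le_gridBelow (hδ : 0 < δ) : u - δ ≤ gridBelow a δ u := by
  have h := (div_le_iff₀ hδ).1 (Int.le_ceil ((u - a) / δ))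
  unfold gridBelow
  linarith

lemma le_gridBelow (hδ : 0 < δ) (hu : a < u) : a ≤ gridBelow a δ u := by
  have h : (1 : ℝ) ≤ ⌈(u - a) / δ⌉ := by
    exact_mod_cast Int.one_le_ceil_iff.2 (div_pos (sub_pos.2 hu) hδ)
  unfold gridBelow
  nlinarith

lemma gridBelow_eq (hδ : 0 < δ) (k : ℕ) (hu : u ∈ Ioc (a + k * δ) (a + (k + 1) * δ)) :
    gridBelow a δ u = a + k * δ := by
  have hceil : ⌈(u - a) / δ⌉ = k + 1 := by
    rw [Int.ceil_eq_iff]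
    push_cast
    constructor
    · rw [add_sub_cancel_right, lt_div_iff₀ hδ]; linarith [hu.1]
    · rw [div_le_iff₀ hδ]; linarith [hu.2]
  simp [gridBelow, hceil]

end gridBelow

/-- The left-hand side is the lower Riemann–Stieltjes sum of `F` against `dA` on the uniform
partition of `[a, b]` into `n + 1` pieces. -/
lemma setIntegral_comp_gridBelow_le {F G : ℝ → ℝ} (A : StieltjesFunction ℝ) {a b : ℝ}
    (hab : a < b) (n : ℕ)
    (h : ∀ t₁ t₂, a ≤ t₁ → t₁ ≤ t₂ → t₂ ≤ b → F t₁ * (A t₂ - A t₁) ≤ G t₂ - G t₁) :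
    ∫ u in Ioc a b, F (gridBelow a ((b - a) / (n + 1)) u) ∂A.measure ≤ G b - G a := by
  set δ := (b - a) / (n + 1) with hδ_def
  have hδ : 0 < δ := div_pos (sub_pos.2 hab) n.cast_add_one_pos
  set t : ℕ → ℝ := fun k ↦ a + k * δ
  have ht₀ : t 0 = a := by simp [t]
  have htn : t (n + 1) = b := by
    simp only [t, hδ_def]; push_cast; field_simp; ring
  have ht_mono : Monotone t := fun i j hij ↦ by
    simp only [t]; gcongr
  have hpiece (k : ℕ) :
      EqOn (fun u ↦ F (gridBelow a δ u)) (fun _ ↦ F (t k)) (Ioc (t k) (t (k + 1))) :=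
    fun u hu ↦ by
      simp only [t] at hu ⊢
      rw [gridBelow_eq hδ k (by push_cast at hu; exact hu)]
  have hint (k : ℕ) :
      IntervalIntegrable (fun u ↦ F (gridBelow a δ u)) A.measure (t k) (t (k + 1)) :=
    (intervalIntegrable_iff_integrableOn_Ioc_of_le (ht_mono k.le_succ)).2
      ((integrableOn_const (by simp [A.measure_Ioc])).congr_fun (hpiece k).symm measurableSet_Ioc)
  calc ∫ u in Ioc a b, F (gridBelow a δ u) ∂A.measure
      = ∑ k ∈ Finset.range (n + 1), ∫ u in t k..t (k + 1), F (gridBelow a δ u) ∂A.measure := by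
        rw [intervalIntegral.sum_integral_adjacent_intervals fun k _ ↦ hint k, ht₀, htn,
          intervalIntegral.integral_of_le hab.le]
    _ = ∑ k ∈ Finset.range (n + 1), F (t k) * (A (t (k + 1)) - A (t k)) := by
        refine Finset.sum_congr rfl fun k _ ↦ ?_
        rw [intervalIntegral.integral_of_le (ht_mono k.le_succ),
          setIntegral_congr_fun measurableSet_Ioc (hpiece k), setIntegral_const, smul_eq_mul,
          measureReal_def, A.measure_Ioc,
          ENNReal.toReal_ofReal (sub_nonneg.2 (A.mono (ht_mono k.le_succ))), mul_comm]
    _ ≤ ∑ k ∈ Finset.range (n + 1), (G (t (k + 1)) - G (t k)) := by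
        refine Finset.sum_le_sum fun k hk ↦ h _ _ (ht₀ ▸ ht_mono k.zero_le) (ht_mono k.le_succ) ?_
        exact htn ▸ ht_mono (Finset.mem_range.1 hk)
    _ = G b - G a := by rw [Finset.sum_range_sub (fun k ↦ G (t k)), htn, ht₀]

theorem setIntegral_leftLim_le_of_mul_sub_le {F G : ℝ → ℝ} (hF : Monotone F)
    (A : StieltjesFunction ℝ) {a b : ℝ} (hab : a ≤ b)
    (h : ∀ t₁ t₂, a ≤ t₁ → t₁ ≤ t₂ → t₂ ≤ b → F t₁ * (A t₂ - A t₁) ≤ G t₂ - G t₁) :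
    ∫ u in Ioc a b, leftLim F u ∂A.measure ≤ G b - G a := by
  rcases hab.eq_or_lt with rfl | hab
  · simp
  set δ : ℕ → ℝ := fun n ↦ (b - a) / (n + 1)
  have hδ (n : ℕ) : 0 < δ n := div_pos (sub_pos.2 hab) n.cast_add_one_pos
  have hδ_lim : Tendsto δ atTop (𝓝 0) := by
    simpa [δ, div_eq_mul_one_div (b - a)] using
      tendsto_one_div_add_atTop_nhds_zero_nat.const_mul (b - a)
  have hlim (u : ℝ) : Tendsto (fun n ↦ F (gridBelow a (δ n) u)) atTop (𝓝 (leftLim F u)) := by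
    refine (hF.tendsto_leftLim u).comp
      (tendsto_nhdsWithin_iff.2 ⟨?_, .of_forall fun n ↦ gridBelow_lt (hδ n)⟩)
    refine tendsto_of_tendsto_of_tendsto_of_le_of_le ?_ tendsto_const_nhds
      (fun n ↦ sub_le_gridBelow (hδ n)) (fun n ↦ (gridBelow_lt (hδ n)).le)
    simpa using tendsto_const_nhds.sub hδ_lim
  have hbound (n : ℕ) : ∀ u ∈ Ioc a b, ‖F (gridBelow a (δ n) u)‖ ≤ max |F a| |F b| :=
    fun u hu ↦ abs_le_max_abs_abs (hF (le_gridBelow (hδ n) hu.1))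
      (hF ((gridBelow_lt (hδ n)).le.trans hu.2))
  have hmeas (n : ℕ) : AEStronglyMeasurable (fun u ↦ F (gridBelow a (δ n) u))
      (A.measure.restrict (Ioc a b)) :=
    (hF.measurable.comp (by unfold gridBelow; fun_prop)).aestronglyMeasurable
  refine le_of_tendsto' (tendsto_integral_of_dominated_convergence _ hmeas
    (integrableOn_const (by simp [A.measure_Ioc]))
    (fun n ↦ ae_restrict_of_forall_mem measurableSet_Ioc (hbound n)) (.of_forall hlim))
    fun n ↦ setIntegral_comp_gridBelow_le A hab n h

lemma Monotone.leftLim_mul_inv {f g : ℝ → ℝ} (hf : Monotone f) (hg : Monotone g)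
    (hg₀ : ∀ t, 0 < g t) (t : ℝ) :
    leftLim f t * (leftLim g t)⁻¹ = leftLim (fun t ↦ f t * (g t)⁻¹) t := by
  have hne : leftLim g t ≠ 0 :=
    ((hg₀ (t - 1)).trans_le (hg.le_leftLim (sub_one_lt t))).ne'
  exact (leftLim_eq_of_tendsto ((hf.tendsto_leftLim t).mul
    ((hg.tendsto_leftLim t).inv₀ hne))).symm

lemma Finset.one_add_sum_le_prod_one_add {ι : Type*} (s : Finset ι) {x : ι → ℝ}
    (hx : ∀ i ∈ s, 0 ≤ x i) : 1 + ∑ i ∈ s, x i ≤ ∏ i ∈ s, (1 + x i) := by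
  classical
  induction s using Finset.induction_on with
  | empty => simp
  | insert j s hj ih =>
    rw [Finset.sum_insert hj, Finset.prod_insert hj]
    have hxj := hx j (Finset.mem_insert_self j s)
    have hs := ih fun i hi ↦ hx i (Finset.mem_insert_of_mem hi)
    have hsum := Finset.sum_nonneg fun i hi ↦ hx i (Finset.mem_insert_of_mem hi)
    nlinarith

lemma Real.log_one_add_tsum_le {ι : Type*} {x : ι → ℝ} (hx : ∀ i, 0 ≤ x i) (hs : Summable x) :
    log (1 + ∑' i, x i) ≤ ∑' i, log (1 + x i) := by
  have hfin (s : Finset ι) : log (1 + ∑ i ∈ s, x i) ≤ ∑ i ∈ s, log (1 + x i) := by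
    rw [← Real.log_prod fun i _ ↦ by linarith [hx i]]
    exact log_le_log (by linarith [Finset.sum_nonneg fun i (_ : i ∈ s) ↦ hx i])
      (s.one_add_sum_le_prod_one_add fun i _ ↦ hx i)
  have hlim : Tendsto (fun s : Finset ι ↦ log (1 + ∑ i ∈ s, x i)) atTop
      (𝓝 (log (1 + ∑' i, x i))) :=
    (continuousAt_log (by linarith [tsum_nonneg hx (L := .unconditional ι)])).tendsto.comp
      (hs.hasSum.const_add 1)
  exact le_of_tendsto_of_tendsto' hlim (summable_log_one_add_of_summable hs).hasSum hfin

lemma one_add_mul_mul_one_add_div_mul_le {γ β Φ x : ℝ} (hγ : 0 ≤ γ) (hγβ : γ ≤ β) (hx : 0 ≤ x)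
    (hxΦ : x ≤ Φ) : (1 + γ * x) * (1 + (β - γ) / (1 + γ * Φ) * x) ≤ 1 + β * x := by
  have hΦ : 0 < 1 + γ * Φ := by nlinarith
  have hc : 0 ≤ (β - γ) / (1 + γ * Φ) := div_nonneg (by linarith) hΦ.le
  have hcΦ : (β - γ) / (1 + γ * Φ) * (1 + γ * Φ) = β - γ := div_mul_cancel₀ _ hΦ.ne'
  nlinarith [mul_nonneg (mul_nonneg (mul_nonneg hc hx) hγ) (sub_nonneg.2 hxΦ)]

lemma tsum_Ioc_add {f : ℝ → ℝ} {a b c : ℝ} (hab : a ≤ b) (hbc : b ≤ c)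
    (hf₁ : Summable fun u : Ioc a b ↦ f u) (hf₂ : Summable fun u : Ioc b c ↦ f u) :
    ∑' u : Ioc a c, f u = ∑' u : Ioc a b, f u + ∑' u : Ioc b c, f u := by
  rw [← Ioc_union_Ioc_eq_Ioc hab hbc]
  exact hf₁.tsum_union_disjoint (Ioc_disjoint_Ioc_of_le le_rfl) hf₂

namespace StieltjesFunction

/-- The Doléans-Dade exponential `E(θA)_t`. -/
noncomputable def stochExp (A : StieltjesFunction ℝ) (θ t : ℝ) : ℝ :=
  exp (θ * A t) * ∏' u : Ioc (0 : ℝ) t, ((1 + θ * jumpOf A u) * exp (-(θ * jumpOf A u)))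

/-- `log (E(θA)_b / E(θA)_a)`. -/
noncomputable def logStochExp (A : StieltjesFunction ℝ) (θ a b : ℝ) : ℝ :=
  θ * (A b - A a - ∑' u : Ioc a b, jumpOf A u) + ∑' u : Ioc a b, log (1 + θ * jumpOf A u)

variable (A : StieltjesFunction ℝ) {θ : ℝ}

lemma jumpOf_nonneg (u : ℝ) : 0 ≤ jumpOf A u :=
  sub_nonneg.2 (A.mono.leftLim_le le_rfl)

lemma one_add_mul_jumpOf_pos (hθ : 0 ≤ θ) (u : ℝ) : 0 < 1 + θ * jumpOf A u := by
  nlinarith [A.jumpOf_nonneg u]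

lemma sum_jumpOf_le {a b : ℝ} (hab : a ≤ b) (S : Finset (Ioc a b)) :
    ∑ u ∈ S, jumpOf A u ≤ A b - A a := by
  rw [← ENNReal.ofReal_le_ofReal_iff (sub_nonneg.2 (A.mono hab)),
    ENNReal.ofReal_sum_of_nonneg (f := fun u : Ioc a b ↦ jumpOf A u) fun u _ ↦ A.jumpOf_nonneg u,
    ← A.measure_Ioc]
  calc ∑ u ∈ S, ENNReal.ofReal (jumpOf A (u : ℝ))
      = A.measure (S.map (Embedding.subtype _) : Set ℝ) := by
        rw [← sum_measure_singleton, Finset.sum_map]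
        exact Finset.sum_congr rfl fun u _ ↦ (A.measure_singleton u).symm
    _ ≤ A.measure (Ioc a b) := measure_mono (by simp)

lemma summable_jumpOf (a b : ℝ) : Summable fun u : Ioc a b ↦ jumpOf A u := by
  rcases le_or_gt a b with hab | hba
  · exact summable_of_sum_le (fun u ↦ A.jumpOf_nonneg u) (A.sum_jumpOf_le hab)
  · have : IsEmpty (Ioc a b) := by simp [hba.le]
    exact .of_finite

lemma tsum_jumpOf_le {a b : ℝ} (hab : a ≤ b) : ∑' u : Ioc a b, jumpOf A u ≤ A b - A a :=
  (A.summable_jumpOf a b).tsum_le_of_sum_le (A.sum_jumpOf_le hab)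

lemma summable_log_one_add_mul_jumpOf (θ a b : ℝ) :
    Summable fun u : Ioc a b ↦ log (1 + θ * jumpOf A u) :=
  summable_log_one_add_of_summable ((A.summable_jumpOf a b).mul_left θ)

lemma stochExp_eq_exp_logStochExp (hθ : 0 ≤ θ) (hA : A 0 = 0) (t : ℝ) :
    A.stochExp θ t = exp (A.logStochExp θ 0 t) := by
  have hlog (u : ℝ) : log ((1 + θ * jumpOf A u) * exp (-(θ * jumpOf A u)))
      = log (1 + θ * jumpOf A u) - θ * jumpOf A u := by
    rw [log_mul (A.one_add_mul_jumpOf_pos hθ u).ne' (exp_pos _).ne', log_exp, sub_eq_add_neg]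
  have hsum : Summable fun u : Ioc (0 : ℝ) t ↦
      log ((1 + θ * jumpOf A u) * exp (-(θ * jumpOf A u))) := by
    simp only [hlog]
    exact (A.summable_log_one_add_mul_jumpOf θ 0 t).sub ((A.summable_jumpOf 0 t).mul_left θ)
  rw [stochExp, ← rexp_tsum_eq_tprod (fun u : Ioc (0 : ℝ) t ↦
    mul_pos (A.one_add_mul_jumpOf_pos hθ u) (exp_pos _)) hsum, ← exp_add]
  simp only [hlog]
  rw [(A.summable_log_one_add_mul_jumpOf θ 0 t).tsum_sub ((A.summable_jumpOf 0 t).mul_left θ),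
    tsum_mul_left, logStochExp, hA]
  congr 1
  ring

lemma logStochExp_of_le {a b : ℝ} (hba : b ≤ a) : A.logStochExp θ a b = θ * (A b - A a) := by
  have : IsEmpty (Ioc a b) := by simp [hba]
  simp [logStochExp]

lemma logStochExp_add {a b c : ℝ} (hab : a ≤ b) (hbc : b ≤ c) :
    A.logStochExp θ a c = A.logStochExp θ a b + A.logStochExp θ b c := by
  rw [logStochExp, logStochExp, logStochExp,
    tsum_Ioc_add (f := jumpOf A) hab hbc (A.summable_jumpOf a b) (A.summable_jumpOf b c),
    tsum_Ioc_add (f := fun u ↦ log (1 + θ * jumpOf A u)) hab hbc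
      (A.summable_log_one_add_mul_jumpOf θ a b) (A.summable_log_one_add_mul_jumpOf θ b c)]
  ring

lemma log_one_add_le_logStochExp (hθ : 0 ≤ θ) {a b : ℝ} (hab : a ≤ b) :
    log (1 + θ * (A b - A a)) ≤ A.logStochExp θ a b := by
  set J := ∑' u : Ioc a b, jumpOf A u
  have hJ₀ : 0 ≤ J := tsum_nonneg fun u ↦ A.jumpOf_nonneg u
  have hJ : J ≤ A b - A a := A.tsum_jumpOf_le hab
  have hcont : log (1 + θ * (A b - A a - J)) ≤ θ * (A b - A a - J) := by
    linarith [log_le_sub_one_of_pos (show 0 < 1 + θ * (A b - A a - J) by nlinarith)]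
  have hjumps : log (1 + θ * J) ≤ ∑' u : Ioc a b, log (1 + θ * jumpOf A u) := by
    rw [← tsum_mul_left]
    exact log_one_add_tsum_le (fun u ↦ mul_nonneg hθ (A.jumpOf_nonneg u))
      ((A.summable_jumpOf a b).mul_left θ)
  have hsplit :
      log (1 + θ * (A b - A a)) ≤ log (1 + θ * (A b - A a - J)) + log (1 + θ * J) := by
    rw [← log_mul (by nlinarith) (by nlinarith)]
    exact log_le_log (by nlinarith)
      (by nlinarith [mul_nonneg (mul_nonneg hθ hθ) (mul_nonneg hJ₀ (sub_nonneg.2 hJ))])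
  rw [logStochExp]
  linarith

lemma logStochExp_le_sub {β γ c : ℝ} (hγ : 0 ≤ γ) (hc : 0 ≤ c) (hcβγ : c ≤ β - γ)
    (hjump : ∀ u, (1 + γ * jumpOf A u) * (1 + c * jumpOf A u) ≤ 1 + β * jumpOf A u)
    {a b : ℝ} (hab : a ≤ b) :
    A.logStochExp c a b ≤ A.logStochExp β a b - A.logStochExp γ a b := by
  have hcont : 0 ≤ (β - γ - c) * (A b - A a - ∑' u : Ioc a b, jumpOf A u) :=
    mul_nonneg (by linarith) (sub_nonneg.2 (A.tsum_jumpOf_le hab))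
  have hjumps : ∑' u : Ioc a b, log (1 + γ * jumpOf A u)
      + ∑' u : Ioc a b, log (1 + c * jumpOf A u) ≤ ∑' u : Ioc a b, log (1 + β * jumpOf A u) := by
    rw [← (A.summable_log_one_add_mul_jumpOf γ a b).tsum_add
      (A.summable_log_one_add_mul_jumpOf c a b)]
    refine Summable.tsum_le_tsum (fun u ↦ ?_) ((A.summable_log_one_add_mul_jumpOf γ a b).add
      (A.summable_log_one_add_mul_jumpOf c a b)) (A.summable_log_one_add_mul_jumpOf β a b)
    rw [← log_mul (A.one_add_mul_jumpOf_pos hγ u).ne' (A.one_add_mul_jumpOf_pos hc u).ne']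
    exact log_le_log (mul_pos (A.one_add_mul_jumpOf_pos hγ u) (A.one_add_mul_jumpOf_pos hc u))
      (hjump u)
  simp only [logStochExp]
  nlinarith

section NullOnNonpos

variable {A} (hA0 : ∀ s ≤ 0, A s = 0)
include hA0

lemma apply_max_zero (t : ℝ) : A (max 0 t) = A t := by
  rcases le_total 0 t with h | h
  · rw [max_eq_right h]
  · rw [max_eq_left h, hA0 t h, hA0 0 le_rfl]

lemma stochExp_eq_exp_max (hθ : 0 ≤ θ) (t : ℝ) :
    A.stochExp θ t = exp (A.logStochExp θ 0 (max 0 t)) := by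
  rw [A.stochExp_eq_exp_logStochExp hθ (hA0 0 le_rfl)]
  rcases le_total 0 t with h | h
  · rw [max_eq_right h]
  · rw [max_eq_left h, A.logStochExp_of_le h, A.logStochExp_of_le le_rfl, hA0 t h, hA0 0 le_rfl]

lemma stochExp_pos (hθ : 0 ≤ θ) (t : ℝ) : 0 < A.stochExp θ t := by
  rw [stochExp_eq_exp_max hA0 hθ]
  exact exp_pos _

lemma monotone_stochExp (hθ : 0 ≤ θ) : Monotone (A.stochExp θ) := by
  intro t₁ t₂ h
  have hm : max 0 t₁ ≤ max 0 t₂ := max_le_max le_rfl h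
  rw [stochExp_eq_exp_max hA0 hθ, stochExp_eq_exp_max hA0 hθ,
    A.logStochExp_add (le_max_left 0 t₁) hm, exp_le_exp, le_add_iff_nonneg_right]
  exact (log_nonneg (by nlinarith [A.mono hm])).trans (A.log_one_add_le_logStochExp hθ hm)

lemma stochExp_ratio_mul_one_add_le {β γ c : ℝ} (hγ : 0 ≤ γ) (hc : 0 ≤ c) (hcβγ : c ≤ β - γ)
    (hjump : ∀ u, (1 + γ * jumpOf A u) * (1 + c * jumpOf A u) ≤ 1 + β * jumpOf A u)
    {t₁ t₂ : ℝ} (h : t₁ ≤ t₂) :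
    A.stochExp β t₁ * (A.stochExp γ t₁)⁻¹ * (1 + c * (A t₂ - A t₁))
      ≤ A.stochExp β t₂ * (A.stochExp γ t₂)⁻¹ := by
  have hm : max 0 t₁ ≤ max 0 t₂ := max_le_max le_rfl h
  have hβ : 0 ≤ β := by linarith
  have hincr : 1 + c * (A t₂ - A t₁) ≤
      exp (A.logStochExp β (max 0 t₁) (max 0 t₂) - A.logStochExp γ (max 0 t₁) (max 0 t₂)) := by
    rw [← apply_max_zero hA0 t₁, ← apply_max_zero hA0 t₂,
      ← exp_log (show 0 < 1 + c * (A (max 0 t₂) - A (max 0 t₁)) by nlinarith [A.mono hm])]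
    exact exp_le_exp.2 ((A.log_one_add_le_logStochExp hc hm).trans
      (A.logStochExp_le_sub hγ hc hcβγ hjump hm))
  simp only [stochExp_eq_exp_max hA0 hβ, stochExp_eq_exp_max hA0 hγ,
    A.logStochExp_add (le_max_left 0 t₁) hm, ← exp_neg, ← exp_add]
  calc _ ≤ exp (A.logStochExp β 0 (max 0 t₁) + -A.logStochExp γ 0 (max 0 t₁)) *
        exp (A.logStochExp β (max 0 t₁) (max 0 t₂) - A.logStochExp γ (max 0 t₁) (max 0 t₂)) :=
        mul_le_mul_of_nonneg_left hincr (exp_pos _).le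
    _ = _ := by rw [← exp_add]; ring_nf

end NullOnNonpos

end StieltjesFunction

theorem integral_ratio_stochExp_le_general (A : StieltjesFunction ℝ) (γ β Φ : ℝ)
    (hγ : 0 < γ) (hγβ : γ < β)
    (hA0 : ∀ s : ℝ, s ≤ 0 → A s = 0)
    (hjump : ∀ s : ℝ, jumpOf A s ≤ Φ)
    (Eβ Eγ : ℝ → ℝ)
    (hEβ : ∀ t, Eβ t = Real.exp (β * A t) *
      ∏' u : Set.Ioc (0 : ℝ) t,
        ((1 + β * jumpOf A u) * Real.exp (-(β * jumpOf A u))))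
    (hEγ : ∀ t, Eγ t = Real.exp (γ * A t) *
      ∏' u : Set.Ioc (0 : ℝ) t,
        ((1 + γ * jumpOf A u) * Real.exp (-(γ * jumpOf A u)))) :
    ∀ s : ℝ, 0 ≤ s →
      ∫ t in Set.Ioc 0 s, Function.leftLim Eβ t * (Function.leftLim Eγ t)⁻¹ ∂A.measure ≤
        (1 + γ * Φ) / (β - γ) * (Eβ s * (Eγ s)⁻¹) := by
  intro s hs
  obtain rfl : Eβ = A.stochExp β := funext hEβ
  obtain rfl : Eγ = A.stochExp γ := funext hEγ
  have hβ : 0 ≤ β := by linarith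
  have hΦ : 0 ≤ Φ := (A.jumpOf_nonneg 0).trans (hjump 0)
  set c := (β - γ) / (1 + γ * Φ)
  have hc : 0 < c := div_pos (by linarith) (by positivity)
  have hcβγ : c ≤ β - γ := div_le_self (by linarith) (by nlinarith)
  have hjump' (u : ℝ) : (1 + γ * jumpOf A u) * (1 + c * jumpOf A u) ≤ 1 + β * jumpOf A u :=
    one_add_mul_mul_one_add_div_mul_le hγ.le hγβ.le (A.jumpOf_nonneg u) (hjump u)
  set F := fun t ↦ A.stochExp β t * (A.stochExp γ t)⁻¹
  have hF_pos (t : ℝ) : 0 < F t :=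
    mul_pos (A.stochExp_pos hA0 hβ t) (inv_pos.2 (A.stochExp_pos hA0 hγ.le t))
  have hF_incr {t₁ t₂ : ℝ} (h : t₁ ≤ t₂) : c * F t₁ * (A t₂ - A t₁) ≤ F t₂ - F t₁ := by
    linarith [A.stochExp_ratio_mul_one_add_le hA0 hγ.le hc.le hcβγ hjump' h]
  have hF_mono : Monotone F := fun t₁ t₂ h ↦ by
    linarith [hF_incr h, mul_nonneg (mul_nonneg hc.le (hF_pos t₁).le) (sub_nonneg.2 (A.mono h))]
  simp_rw [(A.monotone_stochExp hA0 hβ).leftLim_mul_inv (A.monotone_stochExp hA0 hγ.le)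
    (A.stochExp_pos hA0 hγ.le)]
  calc ∫ t in Ioc 0 s, leftLim F t ∂A.measure ≤ F s / c - F 0 / c :=
        setIntegral_leftLim_le_of_mul_sub_le (G := fun t ↦ F t / c) hF_mono A hs
          fun t₁ t₂ _ h _ ↦ by rw [← sub_div, le_div_iff₀ hc]; linarith [hF_incr h]
    _ ≤ F s / c := sub_le_self _ (div_pos (hF_pos 0) hc).le
    _ = (1 + γ * Φ) / (β - γ) * F s := by rw [div_eq_inv_mul, inv_div]

/-- Let `A` be a right-continuous non-decreasing finite function on `[0,∞)` with `A 0 = 0`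
(vanishing on `(-∞,0]`), let `0 < γ < β`, and suppose the jumps of `A` are bounded by
`Φ ≥ 0`. If `Eβ` and `Eγ` are the Doléans-Dade exponentials of `βA` and `γA`,
then for all `s ≥ 0`,
`∫_{(0,s]} Eβ_{t−} · (Eγ_{t−})⁻¹ dA_t ≤ ((1+γΦ)/(β−γ)) · Eβ_s · (Eγ_s)⁻¹`. -/
theorem integral_ratio_stochExp_le (A : StieltjesFunction ℝ) (γ β Φ : ℝ)
    (hγ : 0 < γ) (hγβ : γ < β) (hΦ : 0 ≤ Φ)
    (hA0 : ∀ s : ℝ, s ≤ 0 → A s = 0)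
    (hjump : ∀ s : ℝ, jumpOf A s ≤ Φ)
    (Eβ Eγ : ℝ → ℝ)
    (hEβ : ∀ t, Eβ t = Real.exp (β * A t) *
      ∏' u : Set.Ioc (0 : ℝ) t,
        ((1 + β * jumpOf A u) * Real.exp (-(β * jumpOf A u))))
    (hEγ : ∀ t, Eγ t = Real.exp (γ * A t) *
      ∏' u : Set.Ioc (0 : ℝ) t,
        ((1 + γ * jumpOf A u) * Real.exp (-(γ * jumpOf A u)))) :
    ∀ s : ℝ, 0 ≤ s →
      ∫ t in Set.Ioc 0 s, Function.leftLim Eβ t * (Function.leftLim Eγ t)⁻¹ ∂A.measure ≤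
        (1 + γ * Φ) / (β - γ) * (Eβ s * (Eγ s)⁻¹) :=
  integral_ratio_stochExp_le_general A γ β Φ hγ hγβ hA0 hjump Eβ Eγ hEβ hEγ
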